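/- Let x : ℝ² → ℝ³ and ψ = (ψ₁,ψ₂) : ℝ² → ℝ² be twice differentiable maps, and set y = x ∘ ψ. At every point (t,s) where det J(t,s) > 0 and x_t × x_s ≠ 0 at ψ(t,s), the Gauss and mean curvatures are invariant under the reparametrization: K_y(t,s) = K_x(ψ(t,s)) and H_y(t,s) = H_x(ψ(t,s)), where J(t,s) is the Jacobian matrix of ψ at (t,s). -/

import Mathlib

open Matrix

noncomputable section

/-- ℝ³ with the standard (Euclidean) inner product. -/
abbrev E3 := EuclideanSpace ℝ (Fin 3)

/-- Cross product in ℝ³. -/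
def cross (u v : E3) : E3 := WithLp.toLp 2 (crossProduct u v)

/-- Matrix–vector product `A·u`. -/
def mvec (A : Matrix (Fin 3) (Fin 3) ℝ) (u : E3) : E3 := WithLp.toLp 2 (A.mulVec u)

/-- First partial derivative `x_t` at `p`. -/
def pt (x : ℝ × ℝ → E3) (p : ℝ × ℝ) : E3 := fderiv ℝ x p (1, 0)

/-- First partial derivative `x_s` at `p`. -/
def ps (x : ℝ × ℝ → E3) (p : ℝ × ℝ) : E3 := fderiv ℝ x p (0, 1)

/-- Coefficient `E = x_t · x_t` of the first fundamental form. -/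
def coeffE (x : ℝ × ℝ → E3) (p : ℝ × ℝ) : ℝ := inner ℝ (pt x p) (pt x p)

/-- Coefficient `F = x_t · x_s` of the first fundamental form. -/
def coeffF (x : ℝ × ℝ → E3) (p : ℝ × ℝ) : ℝ := inner ℝ (pt x p) (ps x p)

/-- Coefficient `G = x_s · x_s` of the first fundamental form. -/
def coeffG (x : ℝ × ℝ → E3) (p : ℝ × ℝ) : ℝ := inner ℝ (ps x p) (ps x p)

/-- The first fundamental form `I_x = [[E,F],[F,G]]` at `p`. -/
def firstFF (x : ℝ × ℝ → E3) (p : ℝ × ℝ) : Matrix (Fin 2) (Fin 2) ℝ :=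
  !![coeffE x p, coeffF x p; coeffF x p, coeffG x p]

/-- The unit normal `n_x = (x_t × x_s)/‖x_t × x_s‖` at `p`. -/
def nrm (x : ℝ × ℝ → E3) (p : ℝ × ℝ) : E3 :=
  ‖cross (pt x p) (ps x p)‖⁻¹ • cross (pt x p) (ps x p)

/-- Coefficient `L = x_tt · n_x` of the second fundamental form. -/
def coeffL (x : ℝ × ℝ → E3) (p : ℝ × ℝ) : ℝ := inner ℝ (pt (pt x) p) (nrm x p)

/-- Coefficient `M = x_ts · n_x` of the second fundamental form. -/
def coeffM (x : ℝ × ℝ → E3) (p : ℝ × ℝ) : ℝ := inner ℝ (ps (pt x) p) (nrm x p)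

/-- Coefficient `N = x_ss · n_x` of the second fundamental form. -/
def coeffN (x : ℝ × ℝ → E3) (p : ℝ × ℝ) : ℝ := inner ℝ (ps (ps x) p) (nrm x p)

/-- The second fundamental form `II_x = [[L,M],[M,N]]` at `p`. -/
def secondFF (x : ℝ × ℝ → E3) (p : ℝ × ℝ) : Matrix (Fin 2) (Fin 2) ℝ :=
  !![coeffL x p, coeffM x p; coeffM x p, coeffN x p]

/-- The Weingarten matrix `W_x = I_x⁻¹ · II_x` at `p`. -/
def wein (x : ℝ × ℝ → E3) (p : ℝ × ℝ) : Matrix (Fin 2) (Fin 2) ℝ :=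
  (firstFF x p)⁻¹ * secondFF x p

/-- The Gauss curvature `K_x = (LN − M²)/(EG − F²)` at `p`. -/
def gauss (x : ℝ × ℝ → E3) (p : ℝ × ℝ) : ℝ :=
  (coeffL x p * coeffN x p - coeffM x p ^ 2) / (coeffE x p * coeffG x p - coeffF x p ^ 2)

/-- The mean curvature `H_x = (EN + GL − 2FM)/(2(EG − F²))` at `p`. -/
def mean (x : ℝ × ℝ → E3) (p : ℝ × ℝ) : ℝ :=
  (coeffE x p * coeffN x p + coeffG x p * coeffL x p - 2 * coeffF x p * coeffM x p) /
    (2 * (coeffE x p * coeffG x p - coeffF x p ^ 2))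

/-- The Jacobian matrix of `ψ : ℝ² → ℝ²` at `p`. -/
def jac (ψ : ℝ × ℝ → ℝ × ℝ) (p : ℝ × ℝ) : Matrix (Fin 2) (Fin 2) ℝ :=
  !![(fderiv ℝ ψ p (1, 0)).1, (fderiv ℝ ψ p (0, 1)).1;
     (fderiv ℝ ψ p (1, 0)).2, (fderiv ℝ ψ p (0, 1)).2]

/-! Both fundamental forms are Gram matrices, in the basis `(1,0), (0,1)`, of bilinear forms on
the parameter plane, and under `y = x ∘ ψ` both forms pull back along `dψ`: the first by the chain
rule, the second because the second-order chain rule differs from `d²x (dψ ·) (dψ ·)` only by a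
tangent vector, which is orthogonal to the normal, while the normal itself is unchanged since
`y_t × y_s = det J • (x_t × x_s)` with `det J > 0`. Hence `I_y = Jᵀ I_x J` and `II_y = Jᵀ II_x J`,
and `K = det II / det I` and `2H = tr (adj I · II) / det I` gain the same factor `(det J)²` in
numerator and denominator. -/

open Filter Topology

namespace Matrix

variable {n R : Type*} [Fintype n] [DecidableEq n] [CommRing R]

theorem det_transpose_mul_mul (J A : Matrix n n R) : (Jᵀ * A * J).det = J.det ^ 2 * A.det := by
  rw [det_mul, det_mul, det_transpose]; ring

theorem trace_adjugate_transpose_mul_mul (J A B : Matrix n n R) :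
    (adjugate (Jᵀ * A * J) * (Jᵀ * B * J)).trace = J.det ^ 2 * (adjugate A * B).trace := by
  have hJ : adjugate Jᵀ * Jᵀ = J.det • 1 := by rw [adjugate_mul, det_transpose]
  calc (adjugate (Jᵀ * A * J) * (Jᵀ * B * J)).trace
      = (adjugate J * (adjugate A * (adjugate Jᵀ * Jᵀ) * B) * J).trace := by
        simp only [adjugate_mul_distrib, Matrix.mul_assoc]
    _ = (adjugate A * (adjugate Jᵀ * Jᵀ) * B * (J * adjugate J)).trace := by
        rw [Matrix.mul_assoc, trace_mul_comm, Matrix.mul_assoc]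
    _ = J.det ^ 2 * (adjugate A * B).trace := by
        rw [hJ, mul_adjugate]; simp [trace_smul]; ring

end Matrix

theorem cross_smul_add_smul (u v : E3) (a b c d : ℝ) :
    cross (a • u + c • v) (b • u + d • v) = (a * d - b * c) • cross u v := by
  simp only [cross, WithLp.ofLp_add, WithLp.ofLp_smul, map_add, map_smul, LinearMap.add_apply,
    LinearMap.smul_apply, cross_self, ← cross_anticomm u v, ← WithLp.toLp_smul]
  congr 1
  module

theorem inner_cross_self_left (u v : E3) : inner ℝ (cross u v) u = (0 : ℝ) := by
  simp [cross, EuclideanSpace.inner_eq_star_dotProduct, dot_self_cross]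

theorem inner_cross_self_right (u v : E3) : inner ℝ (cross u v) v = (0 : ℝ) := by
  simp [cross, EuclideanSpace.inner_eq_star_dotProduct, dot_cross_self]

theorem LinearMap.apply_eq_fst_smul_add_snd_smul {R M : Type*} [CommSemiring R]
    [AddCommMonoid M] [Module R M] (L : R × R →ₗ[R] M) (v : R × R) :
    L v = v.1 • L (1, 0) + v.2 • L (0, 1) := by
  rw [← map_smul, ← map_smul, ← map_add]
  simp

section SecondDerivative

variable {𝕜 E F G : Type*} [NontriviallyNormedField 𝕜]
  [NormedAddCommGroup E] [NormedSpace 𝕜 E] [NormedAddCommGroup F] [NormedSpace 𝕜 F]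
  [NormedAddCommGroup G] [NormedSpace 𝕜 G]

theorem fderiv_fderiv_apply_eq {f : E → F} {p : E} (hf : DifferentiableAt 𝕜 (fderiv 𝕜 f) p)
    (u v : E) : fderiv 𝕜 (fun q => fderiv 𝕜 f q v) p u = fderiv 𝕜 (fderiv 𝕜 f) p u v := by
  rw [fderiv_clm_apply hf (differentiableAt_const v)]
  simp

theorem fderiv_fderiv_comp_apply {g : F → G} {f : E → F} {p : E}
    (hg : ContDiffAt 𝕜 2 g (f p)) (hf : ContDiffAt 𝕜 2 f p) (u v : E) :
    fderiv 𝕜 (fderiv 𝕜 (g ∘ f)) p u v =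
      fderiv 𝕜 (fderiv 𝕜 g) (f p) (fderiv 𝕜 f p u) (fderiv 𝕜 f p v) +
        fderiv 𝕜 g (f p) (fderiv 𝕜 (fderiv 𝕜 f) p u v) := by
  have hg' : ∀ᶠ q in 𝓝 p, ContDiffAt 𝕜 2 g (f q) :=
    hf.continuousAt.eventually (hg.eventually (by simp))
  have hf' : ∀ᶠ q in 𝓝 p, ContDiffAt 𝕜 2 f q := hf.eventually (by simp)
  have hchain : fderiv 𝕜 (g ∘ f) =ᶠ[𝓝 p] fun q => (fderiv 𝕜 g (f q)).comp (fderiv 𝕜 f q) := by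
    filter_upwards [hg', hf'] with q hgq hfq
    exact fderiv_comp q (hgq.differentiableAt two_ne_zero) (hfq.differentiableAt two_ne_zero)
  have hDg : DifferentiableAt 𝕜 (fderiv 𝕜 g) (f p) :=
    (hg.fderiv_right (m := 1) le_rfl).differentiableAt one_ne_zero
  have hDf : DifferentiableAt 𝕜 (fderiv 𝕜 f) p :=
    (hf.fderiv_right (m := 1) le_rfl).differentiableAt one_ne_zero
  have hDgf : DifferentiableAt 𝕜 (fun q => fderiv 𝕜 g (f q)) p :=
    hDg.comp p (hf.differentiableAt two_ne_zero)
  rw [hchain.fderiv_eq, fderiv_clm_comp hDgf hDf,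
    fderiv_fun_comp p hDg (hf.differentiableAt two_ne_zero)]
  simp [add_comm]

end SecondDerivative

theorem fderiv_apply_eq_pt_ps (x : ℝ × ℝ → E3) (p v : ℝ × ℝ) :
    fderiv ℝ x p v = v.1 • pt x p + v.2 • ps x p :=
  (fderiv ℝ x p : ℝ × ℝ →ₗ[ℝ] E3).apply_eq_fst_smul_add_snd_smul v

theorem inner_fderiv_nrm (x : ℝ × ℝ → E3) (p v : ℝ × ℝ) :
    inner ℝ (fderiv ℝ x p v) (nrm x p) = (0 : ℝ) := by
  rw [fderiv_apply_eq_pt_ps, nrm, real_inner_smul_right, real_inner_comm, inner_add_right,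
    real_inner_smul_right, real_inner_smul_right, inner_cross_self_left, inner_cross_self_right]
  simp

def firstForm (x : ℝ × ℝ → E3) (p : ℝ × ℝ) : LinearMap.BilinForm ℝ (ℝ × ℝ) :=
  (innerₗ E3).compl₁₂ (fderiv ℝ x p : ℝ × ℝ →ₗ[ℝ] E3) (fderiv ℝ x p)

def secondForm (x : ℝ × ℝ → E3) (p : ℝ × ℝ) : LinearMap.BilinForm ℝ (ℝ × ℝ) :=
  LinearMap.mk₂ ℝ (fun u v => inner ℝ (fderiv ℝ (fderiv ℝ x) p u v) (nrm x p))
    (fun _ _ _ => by simp [inner_add_left]) (fun _ _ _ => by simp [real_inner_smul_left])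
    (fun _ _ _ => by simp [inner_add_left]) (fun _ _ _ => by simp [real_inner_smul_left])

theorem jac_eq_toMatrix (ψ : ℝ × ℝ → ℝ × ℝ) (p : ℝ × ℝ) :
    jac ψ p = LinearMap.toMatrix (Module.Basis.finTwoProd ℝ) (Module.Basis.finTwoProd ℝ)
      (fderiv ℝ ψ p) := by
  ext i j
  fin_cases i <;> fin_cases j <;> simp [jac, LinearMap.toMatrix_apply]

theorem firstFF_eq_toMatrix₂ (x : ℝ × ℝ → E3) (p : ℝ × ℝ) :
    firstFF x p = LinearMap.toMatrix₂ (Module.Basis.finTwoProd ℝ) (Module.Basis.finTwoProd ℝ)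
      (firstForm x p) := by
  ext i j
  fin_cases i <;> fin_cases j <;>
    simp [firstFF, firstForm, coeffE, coeffF, coeffG, pt, ps, real_inner_comm]

theorem secondFF_eq_toMatrix₂ {x : ℝ × ℝ → E3} {p : ℝ × ℝ} (hx : ContDiffAt ℝ 2 x p) :
    secondFF x p = LinearMap.toMatrix₂ (Module.Basis.finTwoProd ℝ) (Module.Basis.finTwoProd ℝ)
      (secondForm x p) := by
  have hD : DifferentiableAt ℝ (fderiv ℝ x) p :=
    (hx.fderiv_right (m := 1) le_rfl).differentiableAt one_ne_zero
  have hL : pt (pt x) p = fderiv ℝ (fderiv ℝ x) p (1, 0) (1, 0) := fderiv_fderiv_apply_eq hD _ _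
  have hM : ps (pt x) p = fderiv ℝ (fderiv ℝ x) p (0, 1) (1, 0) := fderiv_fderiv_apply_eq hD _ _
  have hN : ps (ps x) p = fderiv ℝ (fderiv ℝ x) p (0, 1) (0, 1) := fderiv_fderiv_apply_eq hD _ _
  have hsymm := hx.isSymmSndFDerivAt (by simp) (1, 0) (0, 1)
  ext i j
  fin_cases i <;> fin_cases j <;>
    simp [secondFF, secondForm, coeffL, coeffM, coeffN, hL, hM, hN, hsymm]

theorem gauss_eq_det_div_det (x : ℝ × ℝ → E3) (p : ℝ × ℝ) :
    gauss x p = (secondFF x p).det / (firstFF x p).det := by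
  simp [gauss, secondFF, firstFF, det_fin_two_of, sq]

theorem mean_eq_trace_adjugate_mul_div (x : ℝ × ℝ → E3) (p : ℝ × ℝ) :
    mean x p = (adjugate (firstFF x p) * secondFF x p).trace / (2 * (firstFF x p).det) := by
  simp [mean, secondFF, firstFF, det_fin_two_of, adjugate_fin_two_of, trace_fin_two]
  ring

section Reparametrization

variable {x : ℝ × ℝ → E3} {ψ : ℝ × ℝ → ℝ × ℝ} {p : ℝ × ℝ}

theorem firstFF_comp (hx : DifferentiableAt ℝ x (ψ p)) (hψ : DifferentiableAt ℝ ψ p) :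
    firstFF (x ∘ ψ) p = (jac ψ p)ᵀ * firstFF x (ψ p) * jac ψ p := by
  have hform : firstForm (x ∘ ψ) p =
      (firstForm x (ψ p)).compl₁₂ (fderiv ℝ ψ p : ℝ × ℝ →ₗ[ℝ] ℝ × ℝ) (fderiv ℝ ψ p) := by
    refine LinearMap.ext₂ fun u v => ?_
    simp [firstForm, fderiv_comp p hx hψ]
  rw [firstFF_eq_toMatrix₂, firstFF_eq_toMatrix₂, hform,
    LinearMap.toMatrix₂_compl₁₂ (b₁ := Module.Basis.finTwoProd ℝ)
      (b₂ := Module.Basis.finTwoProd ℝ), jac_eq_toMatrix]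

theorem cross_pt_ps_comp (hx : DifferentiableAt ℝ x (ψ p)) (hψ : DifferentiableAt ℝ ψ p) :
    cross (pt (x ∘ ψ) p) (ps (x ∘ ψ) p) = (jac ψ p).det • cross (pt x (ψ p)) (ps x (ψ p)) := by
  rw [pt, ps, fderiv_comp p hx hψ, ContinuousLinearMap.comp_apply, ContinuousLinearMap.comp_apply,
    fderiv_apply_eq_pt_ps, fderiv_apply_eq_pt_ps, cross_smul_add_smul, jac, det_fin_two_of]

theorem nrm_comp (hx : DifferentiableAt ℝ x (ψ p)) (hψ : DifferentiableAt ℝ ψ p)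
    (hJ : 0 < (jac ψ p).det) : nrm (x ∘ ψ) p = nrm x (ψ p) := by
  change NormedSpace.normalize _ = NormedSpace.normalize _
  rw [cross_pt_ps_comp hx hψ, NormedSpace.normalize_smul_of_pos hJ]

theorem secondFF_comp (hx : ContDiffAt ℝ 2 x (ψ p)) (hψ : ContDiffAt ℝ 2 ψ p)
    (hJ : 0 < (jac ψ p).det) :
    secondFF (x ∘ ψ) p = (jac ψ p)ᵀ * secondFF x (ψ p) * jac ψ p := by
  have hform : secondForm (x ∘ ψ) p =
      (secondForm x (ψ p)).compl₁₂ (fderiv ℝ ψ p : ℝ × ℝ →ₗ[ℝ] ℝ × ℝ) (fderiv ℝ ψ p) := by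
    refine LinearMap.ext₂ fun u v => ?_
    simp [secondForm, fderiv_fderiv_comp_apply hx hψ, inner_add_left, inner_fderiv_nrm,
      nrm_comp (hx.differentiableAt two_ne_zero) (hψ.differentiableAt two_ne_zero) hJ]
  rw [secondFF_eq_toMatrix₂ (hx.comp p hψ), secondFF_eq_toMatrix₂ hx, hform,
    LinearMap.toMatrix₂_compl₁₂ (b₁ := Module.Basis.finTwoProd ℝ)
      (b₂ := Module.Basis.finTwoProd ℝ), jac_eq_toMatrix]

end Reparametrization

theorem curvatures_invariant_under_reparametrization_general
    (x : ℝ × ℝ → E3) (hx : ContDiff ℝ 2 x)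
    (ψ : ℝ × ℝ → ℝ × ℝ) (hψ : ContDiff ℝ 2 ψ) (p : ℝ × ℝ)
    (hJ : 0 < (jac ψ p).det) :
    gauss (x ∘ ψ) p = gauss x (ψ p) ∧ mean (x ∘ ψ) p = mean x (ψ p) := by
  have hI := firstFF_comp (hx.differentiable two_ne_zero (ψ p)) (hψ.differentiable two_ne_zero p)
  have hII := secondFF_comp hx.contDiffAt hψ.contDiffAt hJ
  have hJ2 : (jac ψ p).det ^ 2 ≠ 0 := by positivity
  constructor
  · rw [gauss_eq_det_div_det, gauss_eq_det_div_det, hI, hII, det_transpose_mul_mul,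
      det_transpose_mul_mul, mul_div_mul_left _ _ hJ2]
  · rw [mean_eq_trace_adjugate_mul_div, mean_eq_trace_adjugate_mul_div, hI, hII,
      trace_adjugate_transpose_mul_mul, det_transpose_mul_mul, mul_left_comm,
      mul_div_mul_left _ _ hJ2]

/-- the Gauss and mean curvatures are invariant under an
orientation-preserving reparametrization `y = x ∘ ψ`. -/
theorem curvatures_invariant_under_reparametrization
    (x : ℝ × ℝ → E3) (hx : ContDiff ℝ 2 x)
    (ψ : ℝ × ℝ → ℝ × ℝ) (hψ : ContDiff ℝ 2 ψ) (p : ℝ × ℝ)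
    (hJ : 0 < (jac ψ p).det)
    (hreg : cross (pt x (ψ p)) (ps x (ψ p)) ≠ 0) :
    gauss (x ∘ ψ) p = gauss x (ψ p) ∧ mean (x ∘ ψ) p = mean x (ψ p) :=
  curvatures_invariant_under_reparametrization_general x hx ψ hψ p hJ
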